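/- Let 𝒯 be a directed RTAS of width w and height h that uniquely self-assembles a pattern P, with coloring function f. If there are a color i and positions (x₁, y₁), (x₂, y₂) with 2 ≤ x₁, x₂ ≤ w and 2 ≤ y₁, y₂ ≤ h such that P(x₁−1, y₁) = P(x₁, y₁−1) = P(x₂−1, y₂) = P(x₂, y₂−1) = i but P(x₁, y₁) ≠ P(x₂, y₂), then T contains at least two tile types of color i. -/
import Mathlib


/-- A tile type: a quadruple of glue labels (strings). -/
structure TileType where
  north : String
  west : String
  south : String
  east : String
deriving DecidableEq

/-- An assembly: a partial function from ℤ² to tile types. -/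
abbrev Assembly := ℤ × ℤ → Option TileType

/-- A rectilinear tile assembly system (RTAS) of width `w ≥ 1` and height `h ≥ 1`:
a finite set `T` of tile types, together with an L-shaped seed assembly `σ` whose
domain is `{(x,0) : 0 ≤ x ≤ w} ∪ {(0,y) : 0 ≤ y ≤ h}` and which uses tile types
not in `T`. (All glues have strength 1 and the temperature is 2; this is encoded
in the attachment rule below.) -/
structure RTAS where
  w : ℕ
  h : ℕ
  hw : 1 ≤ w
  hh : 1 ≤ h
  T : Finset TileType
  σ : Assembly
  seed_dom : ∀ p : ℤ × ℤ, (σ p).isSome ↔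
      (0 ≤ p.1 ∧ p.1 ≤ (w : ℤ) ∧ p.2 = 0) ∨ (p.1 = 0 ∧ 0 ≤ p.2 ∧ p.2 ≤ (h : ℤ))
  seed_not_in_T : ∀ p t, σ p = some t → t ∉ T

namespace RTAS

/-- A tile of type `t ∈ T` may attach to assembly `α` at position `p ∉ dom α`:
both the west neighbor and the south neighbor lie in `dom α`, the east glue of
the west neighbor equals `t.west`, and the north glue of the south neighbor
equals `t.south` (cooperation of two strength-1 glues at temperature 2). -/
def Attaches (S : RTAS) (α : Assembly) (p : ℤ × ℤ) (t : TileType) : Prop :=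
  t ∈ S.T ∧ α p = none ∧
    ∃ tw ts : TileType,
      α (p.1 - 1, p.2) = some tw ∧ α (p.1, p.2 - 1) = some ts ∧
      tw.east = t.west ∧ ts.north = t.south

/-- One-step growth: `β` is obtained from `α` by a single tile attachment. -/
def Step (S : RTAS) (α β : Assembly) : Prop :=
  ∃ p t, S.Attaches α p t ∧ β = Function.update α p (some t)

/-- An assembly is producible if it is obtained from the seed `σ` by a finite
sequence of single-tile attachments. -/
def Producible (S : RTAS) (α : Assembly) : Prop :=
  Relation.ReflTransGen S.Step S.σ α

/-- A producible assembly is terminal if no tile can attach to it. -/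
def Terminal (S : RTAS) (α : Assembly) : Prop :=
  S.Producible α ∧ ∀ p t, ¬ S.Attaches α p t

/-- The RTAS is directed if any two producible assemblies have a common
producible extension. -/
def IsDirected (S : RTAS) : Prop :=
  ∀ α β, S.Producible α → S.Producible β →
    ∃ γ, Relation.ReflTransGen S.Step α γ ∧ Relation.ReflTransGen S.Step β γ

/-- Every tile type of `T` appears in some producible assembly. -/
def UsesAllTiles (S : RTAS) : Prop :=
  ∀ t ∈ S.T, ∃ (α : Assembly) (p : ℤ × ℤ), S.Producible α ∧ α p = some t

/-- The domain `{0,…,w} × {0,…,h}` of a pattern of width `w` and height `h`. -/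
def PatternDom (w h : ℕ) : Set (ℤ × ℤ) :=
  {p | 0 ≤ p.1 ∧ p.1 ≤ (w : ℤ) ∧ 0 ≤ p.2 ∧ p.2 ≤ (h : ℤ)}

/-- `S` uniquely self-assembles the pattern `P` (of width `S.w` and height `S.h`)
with coloring function `f`: every terminal producible assembly `α` has domain
`dom P` and satisfies `f (α p) = P p` on it. -/
def UniquelySelfAssembles (S : RTAS) (P : ℤ × ℤ → ℕ) (f : TileType → ℕ) : Prop :=
  ∀ α, S.Terminal α →
    (∀ p : ℤ × ℤ, (α p).isSome ↔ p ∈ PatternDom S.w S.h) ∧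
    (∀ p t, α p = some t → f t = P p)

end RTAS

namespace RTASAux

open RTAS

lemma step_mono (S : RTAS) {α β : Assembly} (h : S.Step α β) {p : ℤ × ℤ} {t : TileType}
    (hp : α p = some t) : β p = some t := by
  obtain ⟨q, s, ⟨_, hq, _⟩, rfl⟩ := h
  rcases eq_or_ne p q with rfl | hne
  · rw [hp] at hq; cases hq
  · rw [Function.update_of_ne hne]; exact hp

lemma rtg_mono (S : RTAS) {α β : Assembly} (h : Relation.ReflTransGen S.Step α β)
    {p : ℤ × ℤ} {t : TileType} (hp : α p = some t) : β p = some t := by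
  induction h with
  | refl => exact hp
  | tail _ hstep ih => exact step_mono S hstep ih

lemma prod_dom (S : RTAS) {α : Assembly} (h : S.Producible α) :
    ∀ p, (α p).isSome → p ∈ PatternDom S.w S.h := by
  induction h with
  | refl =>
    intro p hp
    rcases (S.seed_dom p).mp hp with ⟨a1, a2, a3⟩ | ⟨a1, a2, a3⟩ <;>
      exact ⟨by omega, by omega, by omega, by omega⟩
  | tail _ hstep ih =>
    obtain ⟨q, s, ⟨_, _, tw, ts, hw, hs, _, _⟩, rfl⟩ := hstep
    intro p hp
    rcases eq_or_ne p q with rfl | hne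
    · have hW : 0 ≤ p.1 - 1 ∧ p.1 - 1 ≤ (S.w : ℤ) ∧ 0 ≤ p.2 ∧ p.2 ≤ (S.h : ℤ) :=
        ih (p.1 - 1, p.2) (by rw [hw]; rfl)
      have hS : 0 ≤ p.1 ∧ p.1 ≤ (S.w : ℤ) ∧ 0 ≤ p.2 - 1 ∧ p.2 - 1 ≤ (S.h : ℤ) :=
        ih (p.1, p.2 - 1) (by rw [hs]; rfl)
      exact ⟨hS.1, hS.2.1, hW.2.2.1, hW.2.2.2⟩
    · rw [Function.update_of_ne hne] at hp
      exact ih p hp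

/-- the box of relevant positions -/
noncomputable def box (S : RTAS) : Finset (ℤ × ℤ) :=
  Finset.Icc 0 (S.w : ℤ) ×ˢ Finset.Icc 0 (S.h : ℤ)

lemma attach_pos_mem_box (S : RTAS) {α : Assembly} (hα : S.Producible α)
    {p : ℤ × ℤ} {t : TileType} (hat : S.Attaches α p t) : p ∈ box S := by
  obtain ⟨_, _, tw, ts, hw, hs, _, _⟩ := hat
  have hW := prod_dom S hα (p.1 - 1, p.2) (by rw [hw]; rfl)
  have hS := prod_dom S hα (p.1, p.2 - 1) (by rw [hs]; rfl)
  obtain ⟨a1, a2, a3, a4⟩ := hW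
  obtain ⟨b1, b2, b3, b4⟩ := hS
  simp only [box, Finset.mem_product, Finset.mem_Icc]
  constructor <;> constructor <;> omega

noncomputable def filt (S : RTAS) (α : Assembly) : Finset (ℤ × ℤ) :=
  (box S).filter (fun p => (α p).isSome)

lemma exists_terminal (S : RTAS) : ∃ α, S.Terminal α := by
  suffices h : ∀ (n : ℕ) (α : Assembly), S.Producible α →
      (box S).card ≤ (filt S α).card + n →
      ∃ β, S.Producible β ∧ ∀ p t, ¬ S.Attaches β p t by
    obtain ⟨β, h1, h2⟩ := h (box S).card S.σ Relation.ReflTransGen.refl (by omega)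
    exact ⟨β, h1, h2⟩
  intro n
  induction n with
  | zero =>
    intro α hα hcard
    by_cases hA : ∃ p t, S.Attaches α p t
    · obtain ⟨p, t, hat⟩ := hA
      have hpb := attach_pos_mem_box S hα hat
      have hnone := hat.2.1
      have hss : filt S α ⊂ box S := by
        refine (Finset.ssubset_iff_of_subset (Finset.filter_subset _ _)).mpr ⟨p, hpb, ?_⟩
        simp [filt, hnone]
      have := Finset.card_lt_card hss
      omega
    · push_neg at hA
      exact ⟨α, hα, hA⟩
  | succ n ih =>
    intro α hα hcard
    by_cases hA : ∃ p t, S.Attaches α p t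
    · obtain ⟨p, t, hat⟩ := hA
      have hpb := attach_pos_mem_box S hα hat
      have hnone := hat.2.1
      set β := Function.update α p (some t) with hβ
      have hβprod : S.Producible β := hα.tail ⟨p, t, hat, rfl⟩
      have hsub : insert p (filt S α) ⊆ filt S β := by
        intro q hq
        rcases Finset.mem_insert.mp hq with rfl | hq
        · simp [filt, hpb, hβ, Function.update_self]
        · simp only [filt, Finset.mem_filter] at hq ⊢
          refine ⟨hq.1, ?_⟩
          rcases eq_or_ne q p with rfl | hne
          · simp [hβ, Function.update_self]
          · rw [hβ, Function.update_of_ne hne]; exact hq.2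
      have hpnot : p ∉ filt S α := by simp [filt, hnone]
      have hcard2 : (filt S α).card + 1 ≤ (filt S β).card := by
        have := Finset.card_le_card hsub
        rwa [Finset.card_insert_of_notMem hpnot] at this
      exact ih β hβprod (by omega)
    · push_neg at hA
      exact ⟨α, hα, hA⟩

/-- In the derivation of a producible assembly, every non-seed tile was attached
at some point, to an assembly whose growth continues to `α`. -/
lemma exists_attach_step (S : RTAS) {α : Assembly} (h : S.Producible α)
    {p : ℤ × ℤ} {t : TileType} (hσ : S.σ p = none) (hp : α p = some t) :
    ∃ β, S.Producible β ∧ S.Attaches β p t ∧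
      Relation.ReflTransGen S.Step (Function.update β p (some t)) α := by
  induction h with
  | refl => rw [hσ] at hp; cases hp
  | @tail b c hab hstep ih =>
    obtain ⟨q, s, hat, rfl⟩ := hstep
    rcases eq_or_ne p q with rfl | hne
    · rw [Function.update_self] at hp
      obtain rfl : s = t := by injection hp
      exact ⟨b, hab, hat, Relation.ReflTransGen.refl⟩
    · rw [Function.update_of_ne hne] at hp
      obtain ⟨β, hβ, hat', hrtg⟩ := ih hp
      exact ⟨β, hβ, hat', hrtg.tail ⟨q, s, hat, rfl⟩⟩

lemma terminal_no_ext (S : RTAS) {α δ : Assembly} (hterm : S.Terminal α)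
    (h : Relation.ReflTransGen S.Step α δ) : δ = α := by
  rcases h.cases_head with rfl | ⟨b, hstep, _⟩
  · rfl
  · obtain ⟨p, t, hat, _⟩ := hstep
    exact absurd hat (hterm.2 p t)

end RTASAux

/-- If a directed RTAS uniquely self-assembles `P` and two positions have all
their west and south neighbors colored `i` but receive different colors, then
at least two tile types are colored `i`. -/
theorem at_least_two_tiles_of_color_1 (S : RTAS) (hused : S.UsesAllTiles)
    (hdir : S.IsDirected) (P : ℤ × ℤ → ℕ) (f : TileType → ℕ)
    (hP : S.UniquelySelfAssembles P f)
    (i : ℕ) (x₁ y₁ x₂ y₂ : ℤ)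
    (hx₁ : 2 ≤ x₁) (hx₁' : x₁ ≤ (S.w : ℤ)) (hy₁ : 2 ≤ y₁) (hy₁' : y₁ ≤ (S.h : ℤ))
    (hx₂ : 2 ≤ x₂) (hx₂' : x₂ ≤ (S.w : ℤ)) (hy₂ : 2 ≤ y₂) (hy₂' : y₂ ≤ (S.h : ℤ))
    (h1 : P (x₁ - 1, y₁) = i) (h2 : P (x₁, y₁ - 1) = i)
    (h3 : P (x₂ - 1, y₂) = i) (h4 : P (x₂, y₂ - 1) = i)
    (hne : P (x₁, y₁) ≠ P (x₂, y₂)) :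
    2 ≤ (S.T.filter (fun t => f t = i)).card := by
  classical
  open RTASAux in
  by_contra hcon
  push_neg at hcon
  have hcard : (S.T.filter (fun t => f t = i)).card ≤ 1 := by omega
  -- obtain a terminal assembly
  obtain ⟨α, hterm⟩ := RTASAux.exists_terminal S
  obtain ⟨hdom, hcol⟩ := hP α hterm
  -- helper: positions in the pattern domain carry a tile
  have getTile : ∀ p : ℤ × ℤ, 0 ≤ p.1 → p.1 ≤ (S.w : ℤ) → 0 ≤ p.2 → p.2 ≤ (S.h : ℤ) →
      ∃ t, α p = some t := by
    intro p a b c d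
    have := (hdom p).mpr ⟨a, b, c, d⟩
    exact Option.isSome_iff_exists.mp this
  -- seed is empty at interior positions
  have seedNone : ∀ p : ℤ × ℤ, 1 ≤ p.1 → 1 ≤ p.2 → S.σ p = none := by
    intro p a b
    by_contra hx
    have : (S.σ p).isSome := by
      cases hσ : S.σ p with
      | none => exact absurd hσ hx
      | some t => rfl
    rcases (S.seed_dom p).mp this with ⟨_, _, h3⟩ | ⟨h1, _, _⟩ <;> omega
  -- tiles at the two target positions
  obtain ⟨t₁, ht₁⟩ := getTile (x₁, y₁) (by omega) (by omega) (by omega) (by omega)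
  obtain ⟨t₂, ht₂⟩ := getTile (x₂, y₂) (by omega) (by omega) (by omega) (by omega)
  -- neighbor tiles, all of color i
  obtain ⟨a, ha⟩ := getTile (x₁ - 1, y₁) (by omega) (by omega) (by omega) (by omega)
  obtain ⟨b, hb⟩ := getTile (x₁, y₁ - 1) (by omega) (by omega) (by omega) (by omega)
  obtain ⟨c, hc⟩ := getTile (x₂ - 1, y₂) (by omega) (by omega) (by omega) (by omega)
  obtain ⟨d, hd⟩ := getTile (x₂, y₂ - 1) (by omega) (by omega) (by omega) (by omega)
  -- they belong to T (they were attached during the derivation)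
  have memT : ∀ (p : ℤ × ℤ) (t : TileType), 1 ≤ p.1 → 1 ≤ p.2 → α p = some t → t ∈ S.T := by
    intro p t u v hpt
    obtain ⟨β, _, hat, _⟩ := RTASAux.exists_attach_step S hterm.1 (seedNone p u v) hpt
    exact hat.1
  have haT : a ∈ S.T.filter (fun t => f t = i) := by
    refine Finset.mem_filter.mpr ⟨memT _ _ (by omega) (by omega) ha, ?_⟩
    rw [hcol _ _ ha]; exact h1
  have hbT : b ∈ S.T.filter (fun t => f t = i) := by
    refine Finset.mem_filter.mpr ⟨memT _ _ (by omega) (by omega) hb, ?_⟩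
    rw [hcol _ _ hb]; exact h2
  have hcT : c ∈ S.T.filter (fun t => f t = i) := by
    refine Finset.mem_filter.mpr ⟨memT _ _ (by omega) (by omega) hc, ?_⟩
    rw [hcol _ _ hc]; exact h3
  have hdT : d ∈ S.T.filter (fun t => f t = i) := by
    refine Finset.mem_filter.mpr ⟨memT _ _ (by omega) (by omega) hd, ?_⟩
    rw [hcol _ _ hd]; exact h4
  have hle1 := Finset.card_le_one.mp hcard
  have hba : b = a := hle1 _ hbT _ haT
  have hca : c = a := hle1 _ hcT _ haT
  have hda : d = a := hle1 _ hdT _ haT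
  rw [hba] at hb; rw [hca] at hc; rw [hda] at hd
  -- the attachment of t₁ at (x₁, y₁): glues match a
  obtain ⟨β₁, hβ₁prod, hat₁, hrtg₁⟩ :=
    RTASAux.exists_attach_step S hterm.1 (seedNone (x₁, y₁) (by omega) (by omega)) ht₁
  obtain ⟨ht₁T, _, tw, ts, htw, hts, hglw, hgls⟩ := hat₁
  have htw' : α ((x₁, y₁).1 - 1, (x₁, y₁).2) = some tw := by
    refine RTASAux.rtg_mono S hrtg₁ ?_
    rw [Function.update_of_ne (by intro hx; injection hx with h1' h2'; omega)]
    exact htw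
  have hts' : α ((x₁, y₁).1, (x₁, y₁).2 - 1) = some ts := by
    refine RTASAux.rtg_mono S hrtg₁ ?_
    rw [Function.update_of_ne (by intro hx; injection hx with h1' h2'; omega)]
    exact hts
  have htwa : tw = a := by
    have : some tw = some a := by rw [← htw', ← ha]
    injection this
  have htsa : ts = a := by
    have : some ts = some a := by rw [← hts', ← hb]
    injection this
  rw [htwa] at hglw; rw [htsa] at hgls
  -- the attachment of t₂ at (x₂, y₂): its neighbors there are also a
  obtain ⟨β₂, hβ₂prod, hat₂, hrtg₂⟩ :=
    RTASAux.exists_attach_step S hterm.1 (seedNone (x₂, y₂) (by omega) (by omega)) ht₂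
  obtain ⟨ht₂T, hβ₂none, tw₂, ts₂, htw₂, hts₂, hglw₂, hgls₂⟩ := hat₂
  have htw₂' : α ((x₂, y₂).1 - 1, (x₂, y₂).2) = some tw₂ := by
    refine RTASAux.rtg_mono S hrtg₂ ?_
    rw [Function.update_of_ne (by intro hx; injection hx with h1' h2'; omega)]
    exact htw₂
  have hts₂' : α ((x₂, y₂).1, (x₂, y₂).2 - 1) = some ts₂ := by
    refine RTASAux.rtg_mono S hrtg₂ ?_
    rw [Function.update_of_ne (by intro hx; injection hx with h1' h2'; omega)]
    exact hts₂
  have htwa₂ : tw₂ = a := by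
    have : some tw₂ = some a := by rw [← htw₂', ← hc]
    injection this
  have htsa₂ : ts₂ = a := by
    have : some ts₂ = some a := by rw [← hts₂', ← hd]
    injection this
  rw [htwa₂] at htw₂; rw [htsa₂] at hts₂
  -- so t₁ can also attach at (x₂, y₂) in β₂
  have hat₁' : S.Attaches β₂ (x₂, y₂) t₁ :=
    ⟨ht₁T, hβ₂none, a, a, htw₂, hts₂, hglw, hgls⟩
  have hγprod : S.Producible (Function.update β₂ (x₂, y₂) (some t₁)) :=
    hβ₂prod.tail ⟨(x₂, y₂), t₁, hat₁', rfl⟩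
  obtain ⟨δ, hγδ, hαδ⟩ := hdir _ α hγprod hterm.1
  have hδα : δ = α := RTASAux.terminal_no_ext S hterm hαδ
  rw [hδα] at hγδ
  have hαt₁ : α (x₂, y₂) = some t₁ := by
    refine RTASAux.rtg_mono S hγδ ?_
    rw [Function.update_self]
  have ht12 : t₁ = t₂ := by
    rw [ht₂] at hαt₁; injection hαt₁ with h; exact h.symm
  apply hne
  rw [← hcol _ _ ht₁, ← hcol _ _ ht₂, ht12]
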